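/- arXiv:1912.01969 — 7 statements merged into one kernel-verified Lean document; each statement's English description precedes it below -/
import Mathlib

section
/- Let (p_t, P_T) be a drift process. Then (p_t, P_T) is constant if and only if (p_t, P_T) has no drift, i.e. p_t is P_T-almost surely equal to a fixed probability measure if and only if p_s = p_t for (P_T × P_T)-almost every pair (s,t) ∈ 𝔗 × 𝔗. -/
open MeasureTheory ProbabilityTheory

/-- A drift process `(p_t, P_T)` is *constant* if there is a probability measure `P_X`
such that `p t = P_X` for `P_T`-almost every `t`. -/
def IsConstantDriftProcess {𝔗 𝔛 : Type*} [MeasurableSpace 𝔗] [MeasurableSpace 𝔛]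
    (p : Kernel 𝔗 𝔛) (PT : Measure 𝔗) : Prop :=
  ∃ PX : Measure 𝔛, IsProbabilityMeasure PX ∧ ∀ᵐ t ∂PT, p t = PX

/-- A drift process has *no drift* if `p s = p t` for `(P_T × P_T)`-a.e. pair `(s, t)`. -/
def HasNoDrift {𝔗 𝔛 : Type*} [MeasurableSpace 𝔗] [MeasurableSpace 𝔛]
    (p : Kernel 𝔗 𝔛) (PT : Measure 𝔗) : Prop :=
  ∀ᵐ st ∂(PT.prod PT), p st.1 = p st.2

/-- A drift process is constant if and only if it has no drift. -/
theorem constant_iff_noDrift {𝔗 𝔛 : Type*} [MeasurableSpace 𝔗] [MeasurableSpace 𝔛]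
    (p : Kernel 𝔗 𝔛) [IsMarkovKernel p] (PT : Measure 𝔗) [IsProbabilityMeasure PT] :
    IsConstantDriftProcess p PT ↔ HasNoDrift p PT := by
  constructor
  · rintro ⟨PX, hPX, h⟩
    have h1 : ∀ᵐ st ∂(PT.prod PT), p st.1 = PX := by
      have : (PT.prod PT).fst = PT := Measure.fst_prod
      rw [← this] at h
      exact ae_of_ae_map measurable_fst.aemeasurable h
    have h2 : ∀ᵐ st ∂(PT.prod PT), p st.2 = PX := by
      have : (PT.prod PT).snd = PT := Measure.snd_prod
      rw [← this] at h
      exact ae_of_ae_map measurable_snd.aemeasurable h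
    filter_upwards [h1, h2] with st ha hb
    rw [ha, hb]
  · intro h
    have h' := Measure.ae_ae_of_ae_prod h
    have : PT ≠ 0 := IsProbabilityMeasure.ne_zero PT
    have hne : (ae PT).NeBot := ae_neBot.mpr this
    obtain ⟨s, hs⟩ := h'.exists
    exact ⟨p s, inferInstance, hs.mono fun t ht => ht.symm⟩
end

section
/- Let (p_t, P_T) be a drift process. Then (p_t, P_T) has no proper drift if and only if there exists a probability measure P_X on 𝔛 such that p_t ⊗ P_T = P_X × P_T (the product measure of P_X and P_T on 𝔛 × 𝔗). Moreover, if such a P_X exists, it is unique with this property. -/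
open MeasureTheory ProbabilityTheory

/-- A drift process `(p_t, P_T)` has *no proper drift* if there exists a drift process
`(p'_t, P'_T)` with the same joint measure `p ⊗ P_T = p' ⊗ P'_T` that has no drift. -/
def HasNoProperDrift {𝔗 𝔛 : Type*} [MeasurableSpace 𝔗] [MeasurableSpace 𝔛]
    (p : Kernel 𝔗 𝔛) (PT : Measure 𝔗) : Prop :=
  ∃ (p' : Kernel 𝔗 𝔛) (PT' : Measure 𝔗), IsMarkovKernel p' ∧ IsProbabilityMeasure PT' ∧
    PT' ⊗ₘ p' = PT ⊗ₘ p ∧ HasNoDrift p' PT'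

/-- A drift process has no proper drift iff the joint measure `p ⊗ P_T` is a product measure
`P_X × P_T` for some probability measure `P_X`; moreover, such a `P_X` is unique. -/
theorem noProperDrift_iff_product {𝔗 𝔛 : Type*} [MeasurableSpace 𝔗] [MeasurableSpace 𝔛]
    (p : Kernel 𝔗 𝔛) [IsMarkovKernel p] (PT : Measure 𝔗) [IsProbabilityMeasure PT] :
    (HasNoProperDrift p PT ↔
      ∃ PX : Measure 𝔛, IsProbabilityMeasure PX ∧ PT ⊗ₘ p = PT.prod PX) ∧
    ∀ PX PX' : Measure 𝔛, IsProbabilityMeasure PX → IsProbabilityMeasure PX' →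
      PT ⊗ₘ p = PT.prod PX → PT ⊗ₘ p = PT.prod PX' → PX = PX' := by
  constructor
  · constructor
    · rintro ⟨p', PT', hmk, hprob, heq, hnd⟩
      have h := Measure.ae_ae_of_ae_prod hnd
      obtain ⟨s0, hs0⟩ := h.exists
      have hc : PT' ⊗ₘ p' = PT'.prod (p' s0) := by
        rw [show PT'.prod (p' s0) = PT' ⊗ₘ Kernel.const 𝔗 (p' s0) from
          (Measure.compProd_const).symm]
        exact Measure.compProd_congr (by filter_upwards [hs0] with t ht using ht.symm)
      have hPT : PT' = PT := by
        calc PT' = (PT' ⊗ₘ p').fst := (Measure.fst_compProd PT' p').symm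
        _ = (PT ⊗ₘ p).fst := by rw [heq]
        _ = PT := Measure.fst_compProd PT p
      exact ⟨p' s0, inferInstance, by rw [← heq, hc, hPT]⟩
    · rintro ⟨PX, hPX, hprod⟩
      refine ⟨Kernel.const 𝔗 PX, PT, inferInstance, inferInstance, ?_, ?_⟩
      · rw [Measure.compProd_const, hprod]
      · filter_upwards with st; rfl
  · intro PX PX' h1 h2 e1 e2
    have : PT.prod PX = PT.prod PX' := e1 ▸ e2
    calc PX = (PT.prod PX).snd := (Measure.snd_prod).symm
    _ = (PT.prod PX').snd := by rw [this]
    _ = PX' := Measure.snd_prod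
end

section
/- Let (p_t, P_T) be a drift process and let A, B, C ∈ ℬ be pairwise disjoint sets with P_T(A) > 0, P_T(B) > 0, P_T(C) > 0. If p_A = p_{B ∪ C} and p_{A ∪ C} = p_B, then p_A = p_B = p_C. -/
open MeasureTheory ProbabilityTheory

/-- The `𝔗`-invariant model of a drift process over a non-null set `A`:
the probability measure `p_A(D) = P_T(A)⁻¹ ∫_A p_t(D) dP_T(t)`. -/
noncomputable def invariantModel {𝔗 𝔛 : Type*} [MeasurableSpace 𝔗] [MeasurableSpace 𝔛]
    (p : Kernel 𝔗 𝔛) (PT : Measure 𝔗) (A : Set 𝔗) : Measure 𝔛 :=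
  (PT A)⁻¹ • (PT.restrict A).bind (fun t => p t)

/-!
Write `a, b, c` for the masses of `A, B, C` and `u, v, w` for `p_A, p_B, p_C`. Since
`X ↦ PT X • p_X = (PT.restrict X).bind p` is additive on disjoint sets, the hypotheses say
`(b + c) • u = b • v + c • w` and `(a + c) • v = a • u + c • w`. Adding `a • u` to the first and
`b • v` to the second shows that `(a + b + c) • u` and `(a + b + c) • v` both equal
`a • u + b • v + c • w`, so `u = v`; then the first equation becomes `c • u = c • w`.
-/

open scoped ENNReal

theorem smul_add_smul_eq_of_cross_mixture {R M : Type*} [Semiring R] [AddCommMonoid M]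
    [Module R M] {a b c : R} {u v w : M} (h₁ : (b + c) • u = b • v + c • w)
    (h₂ : (a + c) • v = a • u + c • w) :
    (a + b + c) • u = (a + b + c) • v :=
  calc (a + b + c) • u = a • u + (b + c) • u := by rw [add_assoc, add_smul]
    _ = b • v + (a + c) • v := by rw [h₁, h₂]; abel
    _ = (a + b + c) • v := by rw [← add_smul]; congr 1; abel

namespace MeasureTheory.Measure

variable {α : Type*} [MeasurableSpace α]

theorem eq_of_smul_eq_smul {μ ν : Measure α} {c : ℝ≥0∞} (hc₀ : c ≠ 0) (hc : c ≠ ∞)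
    (h : c • μ = c • ν) : μ = ν := by
  rw [← one_smul ℝ≥0∞ μ, ← one_smul ℝ≥0∞ ν, ← ENNReal.inv_mul_cancel hc₀ hc, mul_smul,
    mul_smul, h]

theorem eq_of_smul_add_smul_eq {μ ν ρ : Measure α} [IsFiniteMeasure μ] {b c : ℝ≥0∞}
    (hb : b ≠ ∞) (hc₀ : c ≠ 0) (hc : c ≠ ∞) (h : b • μ + c • ν = b • μ + c • ρ) : ν = ρ := by
  ext D hD
  have hD' := congrArg (· D) h
  simp only [add_apply, smul_apply, smul_eq_mul] at hD'
  exact (ENNReal.mul_right_inj hc₀ hc).mp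
    ((ENNReal.add_right_inj (ENNReal.mul_ne_top hb (measure_ne_top μ D))).mp hD')

theorem eq_and_eq_of_cross_mixture {μ ν ρ : Measure α} [IsFiniteMeasure μ] {a b c : ℝ≥0∞}
    (ha : a ≠ ∞) (hb : b ≠ ∞) (hc₀ : c ≠ 0) (hc : c ≠ ∞)
    (h₁ : (b + c) • μ = b • ν + c • ρ) (h₂ : (a + c) • ν = a • μ + c • ρ) :
    μ = ν ∧ μ = ρ := by
  have hμν : μ = ν := eq_of_smul_eq_smul (by simp [hc₀]) (by simp [ha, hb, hc])
    (smul_add_smul_eq_of_cross_mixture h₁ h₂)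
  refine ⟨hμν, eq_of_smul_add_smul_eq (μ := μ) hb hc₀ hc ?_⟩
  rw [← add_smul, h₁, hμν]

end MeasureTheory.Measure

section invariantModel

variable {𝔗 𝔛 : Type*} [MeasurableSpace 𝔗] [MeasurableSpace 𝔛] (p : Kernel 𝔗 𝔛)
  (PT : Measure 𝔗)

theorem invariantModel_apply {A : Set 𝔗} {D : Set 𝔛} (hD : MeasurableSet D) :
    invariantModel p PT A D = (PT A)⁻¹ * ∫⁻ t in A, p t D ∂PT := by
  rw [invariantModel, Measure.smul_apply, smul_eq_mul, Measure.bind_apply hD p.aemeasurable]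

instance [IsMarkovKernel p] [IsFiniteMeasure PT] (A : Set 𝔗) :
    IsFiniteMeasure (invariantModel p PT A) := by
  refine ⟨lt_of_le_of_lt ?_ ENNReal.one_lt_top⟩
  simp [invariantModel_apply p PT MeasurableSet.univ]

-- On a null set `(PT A)⁻¹ = ∞`, but the restricted measure is `0`, so both sides vanish.
theorem measure_smul_invariantModel {A : Set 𝔗} (hA : PT A ≠ ∞) :
    PT A • invariantModel p PT A = (PT.restrict A).bind p := by
  by_cases hA₀ : PT A = 0
  · simp [invariantModel, Measure.restrict_eq_zero.mpr hA₀]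
  · rw [invariantModel, smul_smul, ENNReal.mul_inv_cancel hA₀ hA, one_smul]

theorem measure_smul_invariantModel_union [IsFiniteMeasure PT] {A B : Set 𝔗}
    (hAB : Disjoint A B) (hB : MeasurableSet B) :
    PT (A ∪ B) • invariantModel p PT (A ∪ B) =
      PT A • invariantModel p PT A + PT B • invariantModel p PT B := by
  simp only [measure_smul_invariantModel p PT (measure_ne_top PT _)]
  ext D hD
  simp [Measure.bind_apply hD p.aemeasurable, Measure.restrict_union hAB hB]

end invariantModel

theorem invariantModel_eq_of_cross_covering_general {𝔗 𝔛 : Type*} [MeasurableSpace 𝔗]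
    [MeasurableSpace 𝔛] (p : Kernel 𝔗 𝔛) [IsMarkovKernel p]
    (PT : Measure 𝔗) [IsProbabilityMeasure PT]
    {A B C : Set 𝔗} (hC : MeasurableSet C)
    (hAC : Disjoint A C) (hBC : Disjoint B C)
    (hCpos : 0 < PT C)
    (h1 : invariantModel p PT A = invariantModel p PT (B ∪ C))
    (h2 : invariantModel p PT (A ∪ C) = invariantModel p PT B) :
    invariantModel p PT A = invariantModel p PT B ∧
      invariantModel p PT B = invariantModel p PT C := by
  have hmixA := measure_smul_invariantModel_union p PT hBC hC
  rw [← h1, measure_union hBC hC] at hmixA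
  have hmixB := measure_smul_invariantModel_union p PT hAC hC
  rw [h2, measure_union hAC hC] at hmixB
  obtain ⟨hAB, hAC'⟩ := Measure.eq_and_eq_of_cross_mixture (measure_ne_top PT A)
    (measure_ne_top PT B) hCpos.ne' (measure_ne_top PT C) hmixA hmixB
  exact ⟨hAB, hAB ▸ hAC'⟩

/-- If `A, B, C` are pairwise disjoint non-null measurable sets with
`p_A = p_{B ∪ C}` and `p_{A ∪ C} = p_B`, then `p_A = p_B = p_C`. -/
theorem invariantModel_eq_of_cross_covering {𝔗 𝔛 : Type*} [MeasurableSpace 𝔗]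
    [MeasurableSpace 𝔛] (p : Kernel 𝔗 𝔛) [IsMarkovKernel p]
    (PT : Measure 𝔗) [IsProbabilityMeasure PT]
    {A B C : Set 𝔗} (hA : MeasurableSet A) (hB : MeasurableSet B) (hC : MeasurableSet C)
    (hAB : Disjoint A B) (hAC : Disjoint A C) (hBC : Disjoint B C)
    (hApos : 0 < PT A) (hBpos : 0 < PT B) (hCpos : 0 < PT C)
    (h1 : invariantModel p PT A = invariantModel p PT (B ∪ C))
    (h2 : invariantModel p PT (A ∪ C) = invariantModel p PT B) :
    invariantModel p PT A = invariantModel p PT B ∧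
      invariantModel p PT B = invariantModel p PT C :=
  invariantModel_eq_of_cross_covering_general p PT hC hAC hBC hCpos h1 h2
end

section
/- Let (p_t, P_T) be a drift process and let A, B ∈ ℬ be disjoint alternating sets. Then A and its complement A^C are alternating sets, or B and its complement B^C are alternating sets. -/
open MeasureTheory ProbabilityTheory

/-- Two measurable non-null sets `A, B` are *alternating* if `p_A ≠ p_B`. -/
def AlternatingSets {𝔗 𝔛 : Type*} [MeasurableSpace 𝔗] [MeasurableSpace 𝔛]
    (p : Kernel 𝔗 𝔛) (PT : Measure 𝔗) (A B : Set 𝔗) : Prop :=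
  MeasurableSet A ∧ MeasurableSet B ∧ 0 < PT A ∧ 0 < PT B ∧
    invariantModel p PT A ≠ invariantModel p PT B

/-! `P_T(A) p_A + P_T(Aᶜ) p_{Aᶜ} = P_T(𝔗) p_𝔗`, so if `p_A = p_{Aᶜ}` both equal `p_𝔗`.
Were neither `A, Aᶜ` nor `B, Bᶜ` alternating, `p_A = p_𝔗 = p_B`. -/

section

variable {𝔗 𝔛 : Type*} [MeasurableSpace 𝔗] [MeasurableSpace 𝔛] (p : Kernel 𝔗 𝔛)
  {PT : Measure 𝔗} {A : Set 𝔗}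

lemma measure_smul_invariantModel_s5 (h0 : PT A ≠ 0) (hfin : PT A ≠ ⊤) :
    PT A • invariantModel p PT A = p ∘ₘ PT.restrict A := by
  rw [invariantModel, smul_smul, ENNReal.mul_inv_cancel h0 hfin, one_smul]

lemma invariantModel_eq_univ_of_eq_compl [IsFiniteMeasure PT] (hA : MeasurableSet A)
    (h0 : PT A ≠ 0) (h0c : PT Aᶜ ≠ 0)
    (heq : invariantModel p PT A = invariantModel p PT Aᶜ) :
    invariantModel p PT A = invariantModel p PT Set.univ := by
  have huniv : PT Set.univ ≠ 0 := ne_bot_of_le_ne_bot h0 (measure_mono (Set.subset_univ A))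
  have hsmul : PT Set.univ • invariantModel p PT A
      = PT Set.univ • invariantModel p PT Set.univ := calc
    PT Set.univ • invariantModel p PT A
        = PT A • invariantModel p PT A + PT Aᶜ • invariantModel p PT Aᶜ := by
      rw [← heq, ← add_smul, measure_add_measure_compl hA]
    _ = p ∘ₘ PT.restrict A + p ∘ₘ PT.restrict Aᶜ := by
      rw [measure_smul_invariantModel_s5 p h0 (measure_ne_top PT A),
        measure_smul_invariantModel_s5 p h0c (measure_ne_top PT Aᶜ)]
    _ = PT Set.univ • invariantModel p PT Set.univ := by
      rw [← Measure.comp_add, Measure.restrict_add_restrict_compl hA,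
        measure_smul_invariantModel_s5 p huniv (measure_ne_top PT _), Measure.restrict_univ]
  have hcancel := congrArg ((PT Set.univ)⁻¹ • ·) hsmul
  simpa only [smul_smul, ENNReal.inv_mul_cancel huniv (measure_ne_top PT _), one_smul]
    using hcancel

end

theorem alternating_compl_of_alternating_disjoint_general {𝔗 𝔛 : Type*} [MeasurableSpace 𝔗]
    [MeasurableSpace 𝔛] (p : Kernel 𝔗 𝔛)
    (PT : Measure 𝔗) [IsProbabilityMeasure PT]
    {A B : Set 𝔗} (hdisj : Disjoint A B) (hAB : AlternatingSets p PT A B) :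
    AlternatingSets p PT A Aᶜ ∨ AlternatingSets p PT B Bᶜ := by
  obtain ⟨hA, hB, hA0, hB0, hne⟩ := hAB
  have hAc0 : 0 < PT Aᶜ := hB0.trans_le (measure_mono hdisj.subset_compl_left)
  have hBc0 : 0 < PT Bᶜ := hA0.trans_le (measure_mono hdisj.subset_compl_right)
  by_contra! h
  have hAeq : invariantModel p PT A = invariantModel p PT Aᶜ :=
    not_not.mp fun h' => h.1 ⟨hA, hA.compl, hA0, hAc0, h'⟩
  have hBeq : invariantModel p PT B = invariantModel p PT Bᶜ :=
    not_not.mp fun h' => h.2 ⟨hB, hB.compl, hB0, hBc0, h'⟩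
  exact hne <| (invariantModel_eq_univ_of_eq_compl p hA hA0.ne' hAc0.ne' hAeq).trans
    (invariantModel_eq_univ_of_eq_compl p hB hB0.ne' hBc0.ne' hBeq).symm

/-- If `A, B` are disjoint alternating sets, then `A, Aᶜ` are alternating
or `B, Bᶜ` are alternating. -/
theorem alternating_compl_of_alternating_disjoint {𝔗 𝔛 : Type*} [MeasurableSpace 𝔗]
    [MeasurableSpace 𝔛] (p : Kernel 𝔗 𝔛) [IsMarkovKernel p]
    (PT : Measure 𝔗) [IsProbabilityMeasure PT]
    {A B : Set 𝔗} (hdisj : Disjoint A B) (hAB : AlternatingSets p PT A B) :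
    AlternatingSets p PT A Aᶜ ∨ AlternatingSets p PT B Bᶜ :=
  alternating_compl_of_alternating_disjoint_general p PT hdisj hAB
end

section
/- Let (p_t, P_T) be a drift process with 𝔗 = ℝ equipped with the Borel σ-algebra. If (p_t, P_T) has proper drift, then there exists a change-point, i.e. a t₀ ∈ ℝ such that the sets {t < t₀} and {t ≥ t₀} both have positive P_T-measure and p_{{t < t₀}} ≠ p_{{t ≥ t₀}}. -/
/-!
If there is no change-point, then for every half-line `A = [a, ∞)` the invariant models over `A`
and `Aᶜ` agree (or one of them is null), so both coincide with the marginal `μ = p ∘ₘ P_T`, i.e.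
`∫_A p_t(D) dP_T = P_T(A) μ(D)`. Half-lines generate the Borel σ-algebra, so this holds for every
Borel `A`, which says `P_T ⊗ₘ p = P_T × μ`: the process has the same joint law as the drift-free
process `(const μ, P_T)`.
-/

open MeasureTheory ProbabilityTheory

open Set

section

variable {𝔗 𝔛 : Type*} [MeasurableSpace 𝔗] [MeasurableSpace 𝔛]

lemma hasNoDrift_const (μ : Measure 𝔛) (PT : Measure 𝔗) : HasNoDrift (Kernel.const 𝔗 μ) PT :=
  .of_forall fun _ => rfl

lemma hasNoProperDrift_of_compProd_eq_prod {p : Kernel 𝔗 𝔛} {PT : Measure 𝔗}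
    [IsProbabilityMeasure PT] {μ : Measure 𝔛} [IsProbabilityMeasure μ]
    (h : PT ⊗ₘ p = PT.prod μ) : HasNoProperDrift p PT :=
  ⟨Kernel.const 𝔗 μ, PT, inferInstance, inferInstance, by rw [Measure.compProd_const, h],
    hasNoDrift_const μ PT⟩

lemma compProd_eq_prod_of_comp_restrict {p : Kernel 𝔗 𝔛} [IsSFiniteKernel p] {PT : Measure 𝔗}
    [SigmaFinite PT] {μ : Measure 𝔛} [SigmaFinite μ]
    (h : ∀ B, MeasurableSet B → p ∘ₘ PT.restrict B = PT B • μ) : PT ⊗ₘ p = PT.prod μ :=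
  (Measure.prod_eq fun B D hB hD => by
    rw [Measure.compProd_apply_prod hB hD, ← Measure.bind_apply hD p.measurable.aemeasurable,
      h B hB, Measure.smul_apply, smul_eq_mul]).symm

lemma smul_invariantModel (p : Kernel 𝔗 𝔛) (PT : Measure 𝔗) {A : Set 𝔗} (h0 : PT A ≠ 0)
    (htop : PT A ≠ ⊤) : PT A • invariantModel p PT A = p ∘ₘ PT.restrict A := by
  rw [invariantModel, smul_smul, ENNReal.mul_inv_cancel h0 htop, one_smul]

lemma comp_restrict_eq_smul_comp {p : Kernel 𝔗 𝔛} {PT : Measure 𝔗} [IsProbabilityMeasure PT]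
    {A : Set 𝔗} (hA : MeasurableSet A)
    (h : 0 < PT A → 0 < PT Aᶜ → invariantModel p PT A = invariantModel p PT Aᶜ) :
    p ∘ₘ PT.restrict A = PT A • (p ∘ₘ PT) := by
  have hsplit : p ∘ₘ PT = p ∘ₘ PT.restrict A + p ∘ₘ PT.restrict Aᶜ := by
    rw [← Measure.comp_add, Measure.restrict_add_restrict_compl hA]
  have htotal := prob_add_prob_compl (μ := PT) hA
  rcases eq_zero_or_pos (PT A) with hA0 | hApos
  · rw [hA0, Measure.restrict_eq_zero.2 hA0, Measure.bind_zero_left, zero_smul]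
  rcases eq_zero_or_pos (PT Aᶜ) with hAc0 | hAcpos
  · rw [hAc0, add_zero] at htotal
    rw [hsplit, Measure.restrict_eq_zero.2 hAc0, Measure.bind_zero_left, add_zero, htotal,
      one_smul]
  have hm := smul_invariantModel p PT hApos.ne' (measure_ne_top PT A)
  have hmc := smul_invariantModel p PT hAcpos.ne' (measure_ne_top PT Aᶜ)
  rw [← h hApos hAcpos] at hmc
  rw [hsplit, ← hm, ← hmc, ← add_smul, htotal, one_smul]

lemma comp_restrict_eq_smul_of_forall_Ici {α : Type*} [TopologicalSpace α] [MeasurableSpace α]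
    [SecondCountableTopology α] [LinearOrder α] [OrderTopology α] [BorelSpace α]
    {p : Kernel α 𝔛} {PT : Measure α} [IsFiniteMeasure PT] {μ : Measure 𝔛} [IsFiniteMeasure μ]
    (h : ∀ a, p ∘ₘ PT.restrict (Ici a) = PT (Ici a) • μ) {B : Set α} (hB : MeasurableSet B) :
    p ∘ₘ PT.restrict B = PT B • μ := by
  ext D hD
  have := PT.smul_finite (measure_ne_top μ D)
  have hdensity : μ D • PT = PT.withDensity fun t => p t D :=
    Measure.ext_of_Ici _ _ fun a => by
      rw [withDensity_apply _ measurableSet_Ici, ← Measure.bind_apply hD p.measurable.aemeasurable,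
        h a, Measure.smul_apply, Measure.smul_apply, smul_eq_mul, smul_eq_mul, mul_comm]
  rw [Measure.bind_apply hD p.measurable.aemeasurable, ← withDensity_apply _ hB, ← hdensity,
    Measure.smul_apply, Measure.smul_apply, smul_eq_mul, smul_eq_mul, mul_comm]

end

/-- For `𝔗 = ℝ` (with the Borel σ-algebra): if a drift process has proper drift, then
there exists a change-point, i.e. a `t₀ ∈ ℝ` such that `{t < t₀}` and `{t ≥ t₀}` are
non-null and `p_{{t < t₀}} ≠ p_{{t ≥ t₀}}`. -/
theorem changePoint_of_properDrift {𝔛 : Type*} [MeasurableSpace 𝔛]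
    (p : Kernel ℝ 𝔛) [IsMarkovKernel p] (PT : Measure ℝ) [IsProbabilityMeasure PT]
    (hdrift : ¬ HasNoProperDrift p PT) :
    ∃ t₀ : ℝ, 0 < PT {t | t < t₀} ∧ 0 < PT {t | t₀ ≤ t} ∧
      invariantModel p PT {t | t < t₀} ≠ invariantModel p PT {t | t₀ ≤ t} := by
  by_contra! hcp
  have hIci : ∀ a : ℝ, p ∘ₘ PT.restrict (Ici a) = PT (Ici a) • (p ∘ₘ PT) := fun a =>
    comp_restrict_eq_smul_comp measurableSet_Ici fun hIci hIio => by
      rw [compl_Ici] at hIio ⊢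
      exact (hcp a hIio hIci).symm
  exact hdrift (hasNoProperDrift_of_compProd_eq_prod
    (compProd_eq_prod_of_comp_restrict fun _ => comp_restrict_eq_smul_of_forall_Ici hIci))
end

section
/- Let (X_t)_{t ∈ ℕ} be an 𝔛-valued stochastic process on a probability space (Ω,ℱ,ℙ) and let P_T be a probability measure on ℕ with P_T({t}) > 0 for all t ∈ ℕ. If for every n ∈ ℕ and all t₁,…,tₙ ∈ ℕ the induced drift process (p^{(t₁,…,tₙ)}_τ, P_T) has no drift, then X is stationary. -/
open MeasureTheory ProbabilityTheory

/-- A stochastic process `(X_t)_{t ∈ ℕ}` is *stationary* if all its finite-dimensional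
distributions are invariant under time shifts. -/
def Stationary {Ω 𝔛 : Type*} [MeasurableSpace Ω] [MeasurableSpace 𝔛]
    (P : Measure Ω) (X : ℕ → Ω → 𝔛) : Prop :=
  ∀ (n : ℕ) (t : Fin n → ℕ) (τ : ℕ),
    P.map (fun ω i => X (t i) ω) = P.map (fun ω i => X (t i + τ) ω)

/-- Let `(X_t)_{t ∈ ℕ}` be a stochastic process and `P_T` a probability measure on `ℕ`
with `P_T({t}) > 0` for all `t`. If for every `n` and all `t₁, …, tₙ` the induced drift
process `p^{(t₁,…,tₙ)}_τ = P∘(X_{t₁+τ},…,X_{tₙ+τ})⁻¹` has no drift, then `X` is stationary. -/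
theorem stationary_of_noDrift {Ω 𝔛 : Type*} [MeasurableSpace Ω] [MeasurableSpace 𝔛]
    (P : Measure Ω) [IsProbabilityMeasure P] (X : ℕ → Ω → 𝔛)
    (hX : ∀ t, Measurable (X t))
    (PT : Measure ℕ) [IsProbabilityMeasure PT] (hpos : ∀ t : ℕ, 0 < PT {t})
    (h : ∀ (n : ℕ) (t : Fin n → ℕ),
      ∀ᵐ στ ∂(PT.prod PT),
        P.map (fun ω i => X (t i + στ.1) ω) = P.map (fun ω i => X (t i + στ.2) ω)) :
    Stationary P X := by
  intro n t τ
  have key := h n t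
  rw [MeasureTheory.ae_iff] at key
  by_contra hc
  have hmem : ((0 : ℕ), τ) ∈ {στ : ℕ × ℕ |
      ¬ P.map (fun ω i => X (t i + στ.1) ω) = P.map (fun ω i => X (t i + στ.2) ω)} := by
    simp only [Set.mem_setOf_eq]
    simpa using hc
  have hle : PT.prod PT {((0 : ℕ), τ)} ≤ 0 := key ▸ measure_mono (Set.singleton_subset_iff.mpr hmem)
  have : PT.prod PT {((0 : ℕ), τ)} = PT {0} * PT {τ} := by
    rw [show ({((0 : ℕ), τ)} : Set (ℕ × ℕ)) = {0} ×ˢ {τ} by simp, Measure.prod_prod]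
  rw [this] at hle
  exact absurd (le_antisymm hle bot_le) (ENNReal.mul_pos (hpos 0).ne' (hpos τ).ne').ne'
end

section
/- Let (p_t, P_T) be a drift process and suppose the σ-algebra 𝒜 admits a countable generating set that is stable under finite intersections (for example 𝔛 = ℝ^d with the Borel σ-algebra). Then (p_t, P_T) has drift if and only if (p_t, P_T) has proper drift. -/
open MeasureTheory ProbabilityTheory

/-- If the σ-algebra on `𝔛` has a countable generating set stable under finite
intersections (e.g. `𝔛 = ℝ^d` with the Borel σ-algebra), then a drift process has drift
iff it has proper drift. -/
theorem drift_iff_properDrift {𝔗 𝔛 : Type*} [MeasurableSpace 𝔗] [m𝔛 : MeasurableSpace 𝔛]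
    (𝒜₀ : Set (Set 𝔛)) (hcount : 𝒜₀.Countable)
    (hgen : MeasurableSpace.generateFrom 𝒜₀ = m𝔛)
    (hinter : ∀ A ∈ 𝒜₀, ∀ B ∈ 𝒜₀, A ∩ B ∈ 𝒜₀)
    (p : Kernel 𝔗 𝔛) [IsMarkovKernel p] (PT : Measure 𝔗) [IsProbabilityMeasure PT] :
    ¬ HasNoDrift p PT ↔ ¬ HasNoProperDrift p PT := by
  rw [not_iff_not]
  constructor
  · intro h
    exact ⟨p, PT, inferInstance, inferInstance, rfl, h⟩
  · rintro ⟨p', PT', hmk, hpm, heq, hnd⟩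
    haveI := hmk; haveI := hpm
    -- the first marginals agree, so `PT' = PT`
    have hPT : PT' = PT := by
      have h1 : (PT' ⊗ₘ p').fst = PT' := Measure.fst_compProd PT' p'
      have h2 : (PT ⊗ₘ p).fst = PT := Measure.fst_compProd PT p
      rw [heq, h2] at h1
      exact h1.symm
    subst hPT
    -- extract the a.e. constant value `μ` of `p'`
    have h1 : ∀ᵐ s ∂PT', ∀ᵐ t ∂PT', p' s = p' t := Measure.ae_ae_of_ae_prod hnd
    obtain ⟨s₀, hs₀⟩ := h1.exists
    set μ : Measure 𝔛 := p' s₀ with hμ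
    haveI : IsProbabilityMeasure μ := hmk.isProbabilityMeasure s₀
    have hconst : p' =ᵐ[PT'] Kernel.const 𝔗 μ := by
      filter_upwards [hs₀] with t ht
      simp [Kernel.const_apply, ← ht]
    have hprod : PT' ⊗ₘ p = PT'.prod μ := by
      rw [← heq, Measure.compProd_congr hconst, Measure.compProd_const]
    -- for each measurable set `A`, `p · A = μ A` a.e.
    have key : ∀ A : Set 𝔛, MeasurableSet A →
        (fun t ↦ p t A) =ᵐ[PT'] fun _ ↦ μ A := by
      intro A hA
      refine ae_eq_of_forall_setLIntegral_eq_of_sigmaFinite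
        (p.measurable_coe hA) measurable_const fun B hB _ ↦ ?_
      have hl : ∫⁻ t in B, p t A ∂PT' = (PT' ⊗ₘ p) (B ×ˢ A) :=
        (Measure.compProd_apply_prod hB hA).symm
      rw [hl, hprod, Measure.prod_prod, setLIntegral_const, mul_comm]
    -- each `A ∈ 𝒜₀` is measurable
    have hA₀meas : ∀ A ∈ 𝒜₀, MeasurableSet A := fun A hA ↦ by
      rw [← hgen]; exact MeasurableSpace.measurableSet_generateFrom hA
    -- a.e. `t`, `p t` agrees with `μ` on all of `𝒜₀`, hence equals `μ`
    have hae : ∀ᵐ t ∂PT', ∀ A ∈ 𝒜₀, p t A = μ A :=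
      (ae_ball_iff hcount).2 fun A hA ↦ key A (hA₀meas A hA)
    have hae2 : ∀ᵐ t ∂PT', p t = μ := by
      filter_upwards [hae] with t ht
      refine ext_of_generate_finite 𝒜₀ hgen.symm ?_ ht ?_
      · intro s hs u hu _
        exact hinter s hs u hu
      · simp
    have hfst : ∀ᵐ st ∂PT'.prod PT', p st.1 = μ :=
      (Measure.quasiMeasurePreserving_fst.tendsto_ae).eventually hae2
    have hsnd : ∀ᵐ st ∂PT'.prod PT', p st.2 = μ :=
      (Measure.quasiMeasurePreserving_snd.tendsto_ae).eventually hae2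
    filter_upwards [hfst, hsnd] with st h1 h2
    rw [h1, h2]
end
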